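/- Identify ℂ³ ⊗ ℂ³ with ℂ⁹ via the Kronecker ordering (e_{3a+b} = |a⟩⊗|b⟩). Let Π be the orthogonal projection of ℂ⁹ onto the span of v₀ = (e₀ + e₈)/√2 and v₁ = (e₂ + 2e₄ + e₆)/√6, and let Sz = diag(1, 0, −1). Then there is no c ∈ ℂ such that Π (Sz² ⊗ I₃) Π = c Π; i.e., the two-qutrit code fails the Knill–Laflamme detection condition for the single-site quadratic error Sz² ⊗ I₃, so it is not a distance-2 code in the conventional weight-based sense. -/
import Mathlib

/-- Kronecker product of two `3×3` matrices realized on `ℂ⁹` via `e_{3a+b} = |a⟩⊗|b⟩`. -/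
noncomputable def kron33 (A B : Matrix (Fin 3) (Fin 3) ℂ) : Matrix (Fin 9) (Fin 9) ℂ :=
  Matrix.of fun r c =>
    A ⟨(r : ℕ) / 3, by have := r.isLt; omega⟩ ⟨(c : ℕ) / 3, by have := c.isLt; omega⟩ *
    B ⟨(r : ℕ) % 3, by omega⟩ ⟨(c : ℕ) % 3, by omega⟩

/-- The spin-1 angular momentum matrix `Sz = diag(1, 0, −1)`. -/
noncomputable def Sz : Matrix (Fin 3) (Fin 3) ℂ := Matrix.diagonal ![1, 0, -1]

/-- The codeword `v₀ = (|00⟩ + |22⟩)/√2 = (e₀ + e₈)/√2`. -/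
noncomputable def v0 : Fin 9 → ℂ :=
  (Real.sqrt 2 : ℂ)⁻¹ • (Pi.single (0 : Fin 9) (1 : ℂ) + Pi.single (8 : Fin 9) (1 : ℂ))

/-- The codeword `v₁ = (|02⟩ + 2|11⟩ + |20⟩)/√6 = (e₂ + 2e₄ + e₆)/√6`. -/
noncomputable def v1 : Fin 9 → ℂ :=
  (Real.sqrt 6 : ℂ)⁻¹ •
    (Pi.single (2 : Fin 9) (1 : ℂ) + Pi.single (4 : Fin 9) (2 : ℂ) +
     Pi.single (6 : Fin 9) (1 : ℂ))

open Matrix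

lemma sqrt2_sq : ((Real.sqrt 2 : ℝ) : ℂ) * ((Real.sqrt 2 : ℝ) : ℂ) = 2 := by
  rw [← Complex.ofReal_mul, Real.mul_self_sqrt (by norm_num)]; norm_num

lemma sqrt6_sq : ((Real.sqrt 6 : ℝ) : ℂ) * ((Real.sqrt 6 : ℝ) : ℂ) = 6 := by
  rw [← Complex.ofReal_mul, Real.mul_self_sqrt (by norm_num)]; norm_num

lemma sqrt2_ne : ((Real.sqrt 2 : ℝ) : ℂ) ≠ 0 := by
  intro h; have := sqrt2_sq; rw [h] at this; norm_num at this

lemma sqrt6_ne : ((Real.sqrt 6 : ℝ) : ℂ) ≠ 0 := by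
  intro h; have := sqrt6_sq; rw [h] at this; norm_num at this

lemma quad_v0 : (star v0) ⬝ᵥ ((kron33 (Sz*Sz) 1) *ᵥ v0) = 1 := by
  simp (config := { decide := true }) [Matrix.mulVec, dotProduct, Fin.sum_univ_succ,
    kron33, Sz, v0, Matrix.diagonal, Matrix.mul_apply, Matrix.one_apply, Pi.single_apply,
    map_ofNat]
  field_simp [sqrt2_ne]
  linear_combination -sqrt2_sq

lemma quad_v1 : (star v1) ⬝ᵥ ((kron33 (Sz*Sz) 1) *ᵥ v1) = 1/3 := by
  simp (config := { decide := true }) [Matrix.mulVec, dotProduct, Fin.sum_univ_succ,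
    kron33, Sz, v1, Matrix.diagonal, Matrix.mul_apply, Matrix.one_apply, Pi.single_apply,
    map_ofNat]
  field_simp [sqrt6_ne]
  linear_combination -sqrt6_sq

lemma norm_v0 : (star v0) ⬝ᵥ v0 = 1 := by
  simp (config := { decide := true }) [dotProduct, Fin.sum_univ_succ, v0,
    Pi.single_apply, map_ofNat]
  field_simp [sqrt2_ne]
  linear_combination -sqrt2_sq

lemma norm_v1 : (star v1) ⬝ᵥ v1 = 1 := by
  simp (config := { decide := true }) [dotProduct, Fin.sum_univ_succ, v1,
    Pi.single_apply, map_ofNat]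
  field_simp [sqrt6_ne]
  linear_combination -sqrt6_sq

/-- The two-qutrit code fails the Knill–Laflamme detection condition for the single-site
quadratic error `Sz² ⊗ I₃`, so it is not a distance-2 code in the conventional
weight-based sense.  Here `Pr` is the orthogonal projection of `ℂ⁹` onto
`span{v₀, v₁}`. -/
theorem two_qutrit_code_fails_quadratic_error
    (Pr : Matrix (Fin 9) (Fin 9) ℂ)
    (hsa : Pr.IsHermitian) (hidem : Pr * Pr = Pr)
    (hrange : LinearMap.range Pr.mulVecLin = Submodule.span ℂ {v0, v1}) :
    ¬ ∃ c : ℂ, Pr * kron33 (Sz * Sz) 1 * Pr = c • Pr := by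
  rintro ⟨c, hc⟩
  -- v0 and v1 are fixed by Pr
  have hfix : ∀ u : Fin 9 → ℂ, u ∈ Submodule.span ℂ ({v0, v1} : Set (Fin 9 → ℂ)) →
      Pr *ᵥ u = u := by
    intro u hu
    rw [← hrange] at hu
    obtain ⟨w, hw⟩ := hu
    have : Pr.mulVecLin w = Pr *ᵥ w := rfl
    rw [this] at hw
    calc Pr *ᵥ u = Pr *ᵥ (Pr *ᵥ w) := by rw [hw]
      _ = (Pr * Pr) *ᵥ w := by rw [Matrix.mulVec_mulVec]
      _ = Pr *ᵥ w := by rw [hidem]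
      _ = u := hw
  have h0 : Pr *ᵥ v0 = v0 := hfix v0 (Submodule.subset_span (by simp))
  have h1 : Pr *ᵥ v1 = v1 := hfix v1 (Submodule.subset_span (by simp))
  have key : ∀ u : Fin 9 → ℂ, Pr *ᵥ u = u →
      (star u) ⬝ᵥ ((kron33 (Sz * Sz) 1) *ᵥ u) = c * ((star u) ⬝ᵥ u) := by
    intro u hu
    have hvm : star u ᵥ* Pr = star u := by
      calc star u ᵥ* Pr = star u ᵥ* Prᴴ := by rw [hsa.eq]
        _ = star (Pr *ᵥ u) := (Matrix.star_mulVec Pr u).symm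
        _ = star u := by rw [hu]
    have lhs : (star u) ⬝ᵥ ((Pr * kron33 (Sz * Sz) 1 * Pr) *ᵥ u)
        = (star u) ⬝ᵥ ((kron33 (Sz * Sz) 1) *ᵥ u) := by
      rw [← Matrix.mulVec_mulVec, ← Matrix.mulVec_mulVec, hu,
        Matrix.dotProduct_mulVec, hvm]
    have rhs : (star u) ⬝ᵥ ((c • Pr) *ᵥ u) = c * ((star u) ⬝ᵥ u) := by
      rw [Matrix.smul_mulVec, hu]
      simp [dotProduct_smul, smul_eq_mul]
    rw [← lhs, hc, rhs]
  have e0 := key v0 h0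
  have e1 := key v1 h1
  rw [quad_v0, norm_v0] at e0
  rw [quad_v1, norm_v1] at e1
  rw [mul_one] at e0 e1
  rw [← e0] at e1
  norm_num at e1
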